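/- Let n, p be natural numbers, fix u ∈ ℝ, let z₀ ∈ ℝⁿ × ℝⁿ and T > 0, and let f : ℝⁿ × ℝᵖ × ℝ → ℝⁿ be twice continuously differentiable. For each θ ∈ ℝᵖ define the augmented vector field g_θ : ℝⁿ × ℝⁿ → ℝⁿ × ℝⁿ by g_θ(x, s) = ( f(x, θ, u), ∂f/∂u (x, θ, u) + D_x f (x, θ, u)(s) ). Suppose z : ℝ × ℝᵖ → ℝⁿ × ℝⁿ, (t, θ) ↦ z(t, θ) = (x(t, θ), s(t, θ)), is twice continuously differentiable with ∂z/∂t (t, θ) = g_θ(z(t, θ)) and z(0, θ) = z₀ for all t and θ. Fix θ₀ ∈ ℝᵖ, let L : ℝⁿ × ℝⁿ → ℝ be differentiable, and let aᶻ : ℝ → ℝⁿ × ℝⁿ be differentiable with (aᶻ)′(t) = − (D_z g_{θ₀} (z(t, θ₀)))* (aᶻ(t)) for all t ∈ [0, T] and aᶻ(T) = ∇L(z(T, θ₀)). Then for every direction δθ ∈ ℝᵖ, the derivative at θ₀ of the map θ ↦ L(z(T, θ)) in the direction δθ equals ∫₀ᵀ ⟨aᶻ(t), ( D_θ f (x(t,θ₀),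 θ₀, u)(δθ), D_θ(∂f/∂u)(x(t,θ₀), θ₀, u)(δθ) + (D_θ(D_x f)(x(t,θ₀), θ₀, u)(δθ))(s(t,θ₀)) )⟩ dt. -/

import Mathlib

/-!
Differentiating the flow equation in `θ`, and swapping the mixed partials of the `C²` flow, shows
that the sensitivity `v t = ∂_θ z (t, θ₀) δθ` solves `v' = D_z g v + ∂_θ g δθ` with `v 0 = 0`.
Against the adjoint equation this gives `⟪aᶻ, v⟫' = ⟪aᶻ, ∂_θ g δθ⟫`, so integrating over `[0, T]`
and using `aᶻ T = ∇L` turns `DL (v T)` into the integral. The integrand is the explicit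
`θ`-derivative of `g_θ`.
-/

open scoped RealInnerProductSpace

open ContinuousLinearMap

section Sensitivity

variable {P Z W : Type*} [NormedAddCommGroup P] [NormedSpace ℝ P]
  [NormedAddCommGroup Z] [NormedSpace ℝ Z] [NormedAddCommGroup W] [NormedSpace ℝ W]

theorem ContDiff.hasDerivAt_fderiv_param {z : ℝ × P → Z} (hz : ContDiff ℝ 2 z)
    (t : ℝ) (θ₀ δθ : P) :
    HasDerivAt (fun τ => fderiv ℝ (fun θ => z (τ, θ)) θ₀ δθ)
      (fderiv ℝ (fun θ => deriv (fun τ => z (τ, θ)) t) θ₀ δθ) t := by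
  have hz' : Differentiable ℝ z := hz.differentiable two_ne_zero
  have fderiv_slice (τ : ℝ) :
      fderiv ℝ (fun θ => z (τ, θ)) θ₀ δθ = fderiv ℝ z (τ, θ₀) (0, δθ) := by
    have h : HasFDerivAt (fun θ => z (τ, θ)) ((fderiv ℝ z (τ, θ₀)).comp (inr ℝ ℝ P)) θ₀ :=
      (hz' (τ, θ₀)).hasFDerivAt.comp θ₀ (hasFDerivAt_prodMk_right τ θ₀)
    simp [h.fderiv]
  have deriv_slice (θ : P) : deriv (fun τ => z (τ, θ)) t = fderiv ℝ z (t, θ) (1, 0) :=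
    ((hz' (t, θ)).hasFDerivAt.comp_hasDerivAt t
      ((hasDerivAt_id t).prodMk (hasDerivAt_const t θ))).deriv
  obtain ⟨D2, hD2⟩ : DifferentiableAt ℝ (fderiv ℝ z) (t, θ₀) :=
    (hz.fderiv_right le_rfl).differentiable one_ne_zero _
  have hsymm : D2 (1, 0) (0, δθ) = D2 (0, δθ) (1, 0) := by
    rw [← hD2.fderiv]; exact hz.contDiffAt.isSymmSndFDerivAt (by simp) _ _
  have h_t : HasDerivAt (fun τ => fderiv ℝ z (τ, θ₀) (0, δθ)) (D2 (1, 0) (0, δθ)) t := by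
    have h := hD2.comp_hasDerivAt t ((hasDerivAt_id t).prodMk (hasDerivAt_const t θ₀))
    simpa using h.clm_apply (hasDerivAt_const t ((0 : ℝ), δθ))
  have h_θ : HasFDerivAt (fun θ => fderiv ℝ z (t, θ) (1, 0))
      (((D2.comp (inr ℝ ℝ P)).flip (1, 0))) θ₀ := by
    simpa using (hD2.comp θ₀ (hasFDerivAt_prodMk_right t θ₀)).clm_apply
      (hasFDerivAt_const ((1 : ℝ), (0 : P)) θ₀)
  simp only [fderiv_slice, deriv_slice, h_θ.fderiv]
  rwa [flip_apply, comp_apply, inr_apply, ← hsymm]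

theorem fderiv_comp_prodMk_apply {G : P × Z → W} {φ : P → Z} {θ₀ : P}
    (hG : DifferentiableAt ℝ G (θ₀, φ θ₀)) (hφ : DifferentiableAt ℝ φ θ₀) (δθ : P) :
    fderiv ℝ (fun θ => G (θ, φ θ)) θ₀ δθ
      = fderiv ℝ (fun θ => G (θ, φ θ₀)) θ₀ δθ
        + fderiv ℝ (fun ζ => G (θ₀, ζ)) (φ θ₀) (fderiv ℝ φ θ₀ δθ) := by
  have hG' := hG.hasFDerivAt
  have h_graph : HasFDerivAt (fun θ => G (θ, φ θ))
      ((fderiv ℝ G (θ₀, φ θ₀)).comp ((ContinuousLinearMap.id ℝ P).prod (fderiv ℝ φ θ₀))) θ₀ :=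
    hG'.comp θ₀ ((hasFDerivAt_id θ₀).prodMk hφ.hasFDerivAt)
  have h_fst : HasFDerivAt (fun θ => G (θ, φ θ₀)) ((fderiv ℝ G (θ₀, φ θ₀)).comp (inl ℝ P Z)) θ₀ :=
    hG'.comp θ₀ (hasFDerivAt_prodMk_left θ₀ (φ θ₀))
  have h_snd : HasFDerivAt (fun ζ => G (θ₀, ζ)) ((fderiv ℝ G (θ₀, φ θ₀)).comp (inr ℝ P Z))
      (φ θ₀) :=
    hG'.comp (φ θ₀) (hasFDerivAt_prodMk_right θ₀ (φ θ₀))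
  rw [h_graph.fderiv, h_fst.fderiv, h_snd.fderiv]
  simp [← map_add]

theorem hasDerivAt_fderiv_param_of_ode {z : ℝ × P → Z} {G : P × Z → Z} (hz : ContDiff ℝ 2 z)
    (hG : Differentiable ℝ G)
    (hode : ∀ (t : ℝ) (θ : P), deriv (fun τ => z (τ, θ)) t = G (θ, z (t, θ)))
    (t : ℝ) (θ₀ δθ : P) :
    HasDerivAt (fun τ => fderiv ℝ (fun θ => z (τ, θ)) θ₀ δθ)
      (fderiv ℝ (fun ζ => G (θ₀, ζ)) (z (t, θ₀)) (fderiv ℝ (fun θ => z (t, θ)) θ₀ δθ)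
        + fderiv ℝ (fun θ => G (θ, z (t, θ₀))) θ₀ δθ) t := by
  have h := hz.hasDerivAt_fderiv_param t θ₀ δθ
  simp only [hode t] at h
  have hslice : DifferentiableAt ℝ (fun θ => z (t, θ)) θ₀ :=
    (hz.differentiable two_ne_zero (t, θ₀)).comp θ₀
      ((differentiableAt_const t).prodMk differentiableAt_id)
  rwa [fderiv_comp_prodMk_apply (hG _) hslice, add_comm] at h

end Sensitivity

section Adjoint

variable {Z : Type*} [NormedAddCommGroup Z] [InnerProductSpace ℝ Z] [CompleteSpace Z]

theorem HasDerivAt.inner_of_adjoint {a v : ℝ → Z} {A : Z →L[ℝ] Z} {w : Z} {t : ℝ}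
    (ha : HasDerivAt a (-(adjoint A) (a t)) t) (hv : HasDerivAt v (A (v t) + w) t) :
    HasDerivAt (fun τ => ⟪a τ, v τ⟫) ⟪a t, w⟫ t := by
  refine (ha.inner ℝ hv).congr_deriv ?_
  rw [inner_add_right, inner_neg_left, adjoint_inner_left]
  ring

theorem fderiv_terminal_eq_integral_inner_adjoint {P : Type*} [NormedAddCommGroup P]
    [NormedSpace ℝ P] {T : ℝ} (hT : 0 ≤ T) {G : P × Z → Z} (hG : ContDiff ℝ 1 G)
    {z : ℝ × P → Z} (hz : ContDiff ℝ 2 z)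
    (hode : ∀ (t : ℝ) (θ : P), deriv (fun τ => z (τ, θ)) t = G (θ, z (t, θ)))
    {z₀ : Z} (hinit : ∀ θ : P, z (0, θ) = z₀) (θ₀ : P) {L : Z → ℝ} (hL : Differentiable ℝ L)
    {az : ℝ → Z} (haz : Differentiable ℝ az)
    (ha' : ∀ t ∈ Set.Icc (0 : ℝ) T,
      deriv az t = -(adjoint (fderiv ℝ (fun ζ => G (θ₀, ζ)) (z (t, θ₀)))) (az t))
    (haT : az T = gradient L (z (T, θ₀))) (δθ : P) :
    fderiv ℝ (fun θ => L (z (T, θ))) θ₀ δθ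
      = ∫ t in (0 : ℝ)..T, ⟪az t, fderiv ℝ (fun θ => G (θ, z (t, θ₀))) θ₀ δθ⟫ := by
  set v : ℝ → Z := fun t => fderiv ℝ (fun θ => z (t, θ)) θ₀ δθ
  have hslice (t : ℝ) : DifferentiableAt ℝ (fun θ => z (t, θ)) θ₀ :=
    (hz.differentiable two_ne_zero (t, θ₀)).comp θ₀
      ((differentiableAt_const t).prodMk differentiableAt_id)
  have hv0 : v 0 = 0 := by
    simp [v, hinit]
  have hvT : fderiv ℝ (fun θ => L (z (T, θ))) θ₀ δθ = ⟪az T, v T⟫ := by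
    rw [haT, inner_gradient_left, fderiv_fun_comp θ₀ (hL _) (hslice T)]
    rfl
  have hderiv : ∀ t ∈ Set.uIcc 0 T, HasDerivAt (fun τ => ⟪az τ, v τ⟫)
      ⟪az t, fderiv ℝ (fun θ => G (θ, z (t, θ₀))) θ₀ δθ⟫ t := by
    intro t ht
    rw [Set.uIcc_of_le hT] at ht
    exact HasDerivAt.inner_of_adjoint (ha' t ht ▸ (haz t).hasDerivAt)
      (hasDerivAt_fderiv_param_of_ode hz (hG.differentiable one_ne_zero) hode t θ₀ δθ)
  have hcont : Continuous fun t => fderiv ℝ (fun θ => G (θ, z (t, θ₀))) θ₀ δθ := by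
    have hGz : ContDiff ℝ 1 fun q : ℝ × P => G (q.2, z (q.1, θ₀)) :=
      hG.comp (contDiff_snd.prodMk ((hz.of_le one_le_two).comp
        (contDiff_fst.prodMk contDiff_const)))
    exact (ContDiff.fderiv (n := 0) hGz contDiff_const le_rfl).continuous.clm_apply
      continuous_const
  rw [hvT, intervalIntegral.integral_eq_sub_of_hasDerivAt hderiv
    ((haz.continuous.inner hcont).intervalIntegrable 0 T), hv0, inner_zero_right, sub_zero]

end Adjoint

section AugmentedField

variable {E P : Type*} [NormedAddCommGroup E] [NormedSpace ℝ E]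
  [NormedAddCommGroup P] [NormedSpace ℝ P]

@[fun_prop]
theorem WithLp.contDiff_fst {F : Type*} [NormedAddCommGroup F] [NormedSpace ℝ F]
    {n : WithTop ℕ∞} : ContDiff ℝ n (WithLp.fst : WithLp 2 (E × F) → E) :=
  (WithLp.fstL 2 ℝ E F).contDiff

@[fun_prop]
theorem WithLp.contDiff_snd {F : Type*} [NormedAddCommGroup F] [NormedSpace ℝ F]
    {n : WithTop ℕ∞} : ContDiff ℝ n (WithLp.snd : WithLp 2 (E × F) → F) :=
  (WithLp.sndL 2 ℝ E F).contDiff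

attribute [fun_prop] WithLp.contDiff_toLp

noncomputable def augmentedField (f : E × P × ℝ → E) (u : ℝ) (θ : P) (ζ : WithLp 2 (E × E)) :
    WithLp 2 (E × E) :=
  WithLp.toLp 2 (f (ζ.fst, θ, u),
    deriv (fun υ => f (ζ.fst, θ, υ)) u + fderiv ℝ (fun y => f (y, θ, u)) ζ.fst ζ.snd)

variable {f : E × P × ℝ → E}

theorem contDiff_deriv_control (hf : ContDiff ℝ 2 f) (u : ℝ) :
    ContDiff ℝ 1 fun q : E × P => deriv (fun υ => f (q.1, q.2, υ)) u :=
  (ContDiff.fderiv (m := 2) (by unfold Function.uncurry; fun_prop) contDiff_const le_rfl).clm_apply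
    contDiff_const

theorem contDiff_fderiv_state (hf : ContDiff ℝ 2 f) (u : ℝ) :
    ContDiff ℝ 1 fun q : E × P => fderiv ℝ (fun y => f (y, q.2, u)) q.1 :=
  ContDiff.fderiv (m := 2) (by unfold Function.uncurry; fun_prop) contDiff_fst le_rfl

theorem contDiff_augmentedField (hf : ContDiff ℝ 2 f) (u : ℝ) :
    ContDiff ℝ 1 fun q : P × WithLp 2 (E × E) => augmentedField f u q.1 q.2 := by
  have hq : ContDiff ℝ 1 fun q : P × WithLp 2 (E × E) => (q.2.fst, q.1) := by fun_prop
  exact WithLp.contDiff_toLp.comp (((hf.of_le one_le_two).comp (by fun_prop)).prodMk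
    (((contDiff_deriv_control hf u).comp hq).add
      (((contDiff_fderiv_state hf u).comp hq).clm_apply (by fun_prop))))

theorem fderiv_augmentedField_param (hf : ContDiff ℝ 2 f) (u : ℝ) (xx ss : E) (θ₀ δθ : P) :
    fderiv ℝ (fun θ => augmentedField f u θ (WithLp.toLp 2 (xx, ss))) θ₀ δθ
      = WithLp.toLp 2 (fderiv ℝ (fun θ => f (xx, θ, u)) θ₀ δθ,
          fderiv ℝ (fun θ => deriv (fun υ => f (xx, θ, υ)) u) θ₀ δθ
            + fderiv ℝ (fun θ => fderiv ℝ (fun y => f (y, θ, u)) xx) θ₀ δθ ss) := by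
  have hslice : ContDiff ℝ 1 fun θ : P => (xx, θ) := by fun_prop
  have h_f : DifferentiableAt ℝ (fun θ => f (xx, θ, u)) θ₀ :=
    ((hf.of_le one_le_two).comp (by fun_prop)).differentiable one_ne_zero θ₀
  have h_u : DifferentiableAt ℝ (fun θ => deriv (fun υ => f (xx, θ, υ)) u) θ₀ :=
    ((contDiff_deriv_control hf u).comp hslice).differentiable one_ne_zero θ₀
  have h_x : DifferentiableAt ℝ (fun θ => fderiv ℝ (fun y => f (y, θ, u)) xx) θ₀ :=
    ((contDiff_fderiv_state hf u).comp hslice).differentiable one_ne_zero θ₀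
  have h : HasFDerivAt (fun θ => augmentedField f u θ (WithLp.toLp 2 (xx, ss))) _ θ₀ :=
    (WithLp.prodContinuousLinearEquiv 2 ℝ E E).symm.hasFDerivAt.comp θ₀
      (h_f.hasFDerivAt.prodMk (h_u.hasFDerivAt.add
        (h_x.hasFDerivAt.clm_apply (hasFDerivAt_const ss θ₀))))
  rw [h.fderiv]
  simp

end AugmentedField

/-- **Adjoint-based gradient formula for TRASE-NODEs.**
For the augmented ODE `∂z/∂t (t,θ) = g_θ(z(t,θ))` with
`g_θ(x,s) = (f(x,θ,u), ∂f/∂u(x,θ,u) + D_x f(x,θ,u) s)` on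
`ℝ²ⁿ = WithLp 2 (ℝⁿ × ℝⁿ)`, `z(0,θ) = z₀`, terminal loss `L`, and augmented
adjoint state `aᶻ` solving `(aᶻ)′(t) = −(D_z g_{θ₀})* aᶻ(t)` on `[0,T]` with
`aᶻ(T) = ∇L(z(T,θ₀))`, the directional derivative at `θ₀` of `θ ↦ L(z(T,θ))`
in direction `δθ` equals
`∫₀ᵀ ⟨aᶻ(t), (D_θ f δθ, D_θ(∂f/∂u) δθ + (D_θ(D_x f) δθ) s(t,θ₀))⟩ dt`. -/
theorem trase_augmented_adjoint_gradient
    (n p : ℕ) (u : ℝ)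
    (z₀ : WithLp 2 (EuclideanSpace ℝ (Fin n) × EuclideanSpace ℝ (Fin n)))
    (T : ℝ) (hT : 0 < T)
    (f : EuclideanSpace ℝ (Fin n) × EuclideanSpace ℝ (Fin p) × ℝ → EuclideanSpace ℝ (Fin n))
    (hf : ContDiff ℝ 2 f)
    (g : EuclideanSpace ℝ (Fin p) →
         WithLp 2 (EuclideanSpace ℝ (Fin n) × EuclideanSpace ℝ (Fin n)) →
         WithLp 2 (EuclideanSpace ℝ (Fin n) × EuclideanSpace ℝ (Fin n)))
    (hg : ∀ (θ : EuclideanSpace ℝ (Fin p)) (xx ss : EuclideanSpace ℝ (Fin n)),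
      g θ ((WithLp.equiv 2 _).symm (xx, ss))
        = (WithLp.equiv 2 _).symm (f (xx, θ, u),
            deriv (fun υ => f (xx, θ, υ)) u
              + (fderiv ℝ (fun y => f (y, θ, u)) xx) ss))
    (z : ℝ × EuclideanSpace ℝ (Fin p) →
         WithLp 2 (EuclideanSpace ℝ (Fin n) × EuclideanSpace ℝ (Fin n)))
    (hz : ContDiff ℝ 2 z)
    (x s : ℝ × EuclideanSpace ℝ (Fin p) → EuclideanSpace ℝ (Fin n))
    (hxs : ∀ (t : ℝ) (θ : EuclideanSpace ℝ (Fin p)),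
      z (t, θ) = (WithLp.equiv 2 _).symm (x (t, θ), s (t, θ)))
    (hode : ∀ (t : ℝ) (θ : EuclideanSpace ℝ (Fin p)),
      deriv (fun τ => z (τ, θ)) t = g θ (z (t, θ)))
    (hinit : ∀ θ : EuclideanSpace ℝ (Fin p), z (0, θ) = z₀)
    (θ₀ : EuclideanSpace ℝ (Fin p))
    (L : WithLp 2 (EuclideanSpace ℝ (Fin n) × EuclideanSpace ℝ (Fin n)) → ℝ)
    (hL : Differentiable ℝ L)
    (az : ℝ → WithLp 2 (EuclideanSpace ℝ (Fin n) × EuclideanSpace ℝ (Fin n)))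
    (haz : Differentiable ℝ az)
    (ha' : ∀ t ∈ Set.Icc (0 : ℝ) T,
      deriv az t
        = - (ContinuousLinearMap.adjoint (fderiv ℝ (g θ₀) (z (t, θ₀)))) (az t))
    (haT : az T = gradient L (z (T, θ₀))) :
    ∀ δθ : EuclideanSpace ℝ (Fin p),
      fderiv ℝ (fun θ => L (z (T, θ))) θ₀ δθ
        = ∫ t in (0 : ℝ)..T,
            ⟪az t, (WithLp.equiv 2 _).symm
              (fderiv ℝ (fun θ => f (x (t, θ₀), θ, u)) θ₀ δθ,
               fderiv ℝ (fun θ => deriv (fun υ => f (x (t, θ₀), θ, υ)) u) θ₀ δθ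
                 + (fderiv ℝ (fun θ => fderiv ℝ (fun y => f (y, θ, u)) (x (t, θ₀))) θ₀ δθ)
                     (s (t, θ₀)))⟫ := by
  intro δθ
  obtain rfl : g = augmentedField f u := funext₂ fun θ ζ => hg θ ζ.fst ζ.snd
  rw [fderiv_terminal_eq_integral_inner_adjoint hT.le (contDiff_augmentedField hf u) hz hode
    hinit θ₀ hL haz ha' haT δθ]
  refine intervalIntegral.integral_congr fun t _ => ?_
  simp only [hxs, WithLp.equiv_symm_apply, fderiv_augmentedField_param hf]
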